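/- Let g be a continuous distortion function and set α_{n−1} = g((n−1)/n). Then for every α with α_{n−1} < α < 1 and every x ∈ ℝⁿ, the non-scaled generalized-ES norm satisfies ⟨⟨x⟩⟩_α^{g} = n(1−α) |x|_(n), where |x|_(n) = max_{1≤i≤n} |x_i|. -/

import Mathlib

open Finset

/-- The absolute values of the components of `x`, arranged in increasing order:
`absSorted x i` is `|x|_(i+1)` in the paper's notation. -/
noncomputable def absSorted {n : ℕ} (x : Fin n → ℝ) : Fin n → ℝ :=
  fun i => |x (Tuple.sort (fun j => |x j|) i)|

/-- `coeff n g i = g((i+1)/n) - g(i/n)`, the paper's `c_{i+1}`. -/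
noncomputable def coeff (n : ℕ) (g : ℝ → ℝ) (i : Fin n) : ℝ :=
  g (((i : ℕ) + 1 : ℝ) / n) - g (((i : ℕ) : ℝ) / n)

/-- The objective function whose infimum over `t` defines the scaled generalized-ES norm. -/
noncomputable def sgesObj {n : ℕ} (g : ℝ → ℝ) (α : ℝ) (x : Fin n → ℝ) (t : ℝ) : ℝ :=
  t + (1 - α)⁻¹ * ∑ i, coeff n g i * max (absSorted x i - t) 0

/-- The scaled generalized-ES norm `⟨⟨x⟩⟩_α^{S,g}`. -/
noncomputable def sges {n : ℕ} (g : ℝ → ℝ) (α : ℝ) (x : Fin n → ℝ) : ℝ :=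
  ⨅ t : ℝ, sgesObj g α x t

/-- The non-scaled generalized-ES norm `⟨⟨x⟩⟩_α^{g} = n(1-α)⟨⟨x⟩⟩_α^{S,g}`. -/
noncomputable def nges {n : ℕ} (g : ℝ → ℝ) (α : ℝ) (x : Fin n → ℝ) : ℝ :=
  (n : ℝ) * (1 - α) * sges g α x

/-- The dual norm of a (norm) functional `N` on `ℝⁿ`. -/
noncomputable def dualNorm {n : ℕ} (N : (Fin n → ℝ) → ℝ) (y : Fin n → ℝ) : ℝ :=
  sSup {r : ℝ | ∃ x : Fin n → ℝ, N x ≤ 1 ∧ r = ∑ i, x i * y i}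

/-- The ordered weighted L1 (OWL) norm. -/
noncomputable def owl {n : ℕ} (w : Fin n → ℝ) (x : Fin n → ℝ) : ℝ :=
  ∑ i, w i * absSorted x i

/-! For `g((n-1)/n) < α < 1` the last weight `c_n = 1 - g((n-1)/n)` exceeds `1 - α`, so the
objective at any `t` is at least `t + (|x|_(n) - t)_+ ≥ |x|_(n)`, while at `t = |x|_(n)` every
`(|x|_(i) - t)_+` vanishes. Hence the infimum is attained at `t = |x|_(n)`. -/

theorem coeff_nonneg {n : ℕ} {g : ℝ → ℝ} (hg : MonotoneOn g (Set.Icc 0 1)) (i : Fin n) :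
    0 ≤ coeff n g i := by
  have hn : (0 : ℝ) < n := by exact_mod_cast i.pos
  have hi : (i : ℝ) + 1 ≤ n := by exact_mod_cast i.isLt
  refine sub_nonneg.mpr (hg ⟨by positivity, ?_⟩ ⟨by positivity, ?_⟩ (by gcongr; linarith))
  · exact (div_le_one hn).mpr (by linarith)
  · exact (div_le_one hn).mpr hi

theorem coeff_last (m : ℕ) (g : ℝ → ℝ) :
    coeff (m + 1) g (Fin.last m) = g 1 - g (m / (m + 1)) := by
  have hm : ((m : ℝ) + 1) / (m + 1) = 1 := div_self (by positivity)
  simp [coeff, hm]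

theorem absSorted_le_ciSup {n : ℕ} (x : Fin n → ℝ) (i : Fin n) : absSorted x i ≤ ⨆ j, |x j| :=
  le_ciSup (f := fun j => |x j|) (Set.finite_range _).bddAbove _

theorem absSorted_last (m : ℕ) (x : Fin (m + 1) → ℝ) :
    absSorted x (Fin.last m) = ⨆ j, |x j| := by
  refine le_antisymm (absSorted_le_ciSup x _) (ciSup_le fun j => ?_)
  have hj : absSorted x ((Tuple.sort fun j => |x j|).symm j) = |x j| := by
    simp [absSorted]
  exact hj ▸ Tuple.monotone_sort (fun j => |x j|) (Fin.le_last _)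

theorem sgesObj_of_forall_absSorted_le {n : ℕ} (g : ℝ → ℝ) (α : ℝ) (x : Fin n → ℝ) {t : ℝ}
    (ht : ∀ i, absSorted x i ≤ t) : sgesObj g α x t = t := by
  simp [sgesObj, fun i => max_eq_right (sub_nonpos.mpr (ht i))]

theorem absSorted_le_sgesObj {n : ℕ} {g : ℝ → ℝ} {α : ℝ} (x : Fin n → ℝ) (t : ℝ)
    (hc : ∀ i, 0 ≤ coeff n g i) (hα : α < 1) {i : Fin n} (hci : 1 - α ≤ coeff n g i) :
    absSorted x i ≤ sgesObj g α x t := by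
  have hsum : (1 - α) * max (absSorted x i - t) 0 ≤
      ∑ j, coeff n g j * max (absSorted x j - t) 0 :=
    (mul_le_mul_of_nonneg_right hci (le_max_right _ _)).trans <|
      single_le_sum (f := fun j => coeff n g j * max (absSorted x j - t) 0)
        (fun j _ => mul_nonneg (hc j) (le_max_right _ _)) (mem_univ i)
  have hgap : max (absSorted x i - t) 0 ≤
      (1 - α)⁻¹ * ∑ j, coeff n g j * max (absSorted x j - t) 0 := by
    rwa [← div_eq_inv_mul, le_div_iff₀' (sub_pos.mpr hα)]
  rw [sgesObj]
  linarith [le_max_left (absSorted x i - t) 0]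

theorem sges_eq_absSorted {n : ℕ} {g : ℝ → ℝ} {α : ℝ} (x : Fin n → ℝ)
    (hc : ∀ i, 0 ≤ coeff n g i) (hα : α < 1) {i : Fin n} (hci : 1 - α ≤ coeff n g i)
    (hmax : ∀ j, absSorted x j ≤ absSorted x i) : sges g α x = absSorted x i :=
  IsLeast.csInf_eq ⟨⟨_, sgesObj_of_forall_absSorted_le g α x hmax⟩,
    by rintro _ ⟨t, rfl⟩; exact absSorted_le_sgesObj x t hc hα hci⟩

theorem stmt12_general (n : ℕ) (hn : 1 ≤ n) (g : ℝ → ℝ)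
    (hg_mono : MonotoneOn g (Set.Icc 0 1)) (hg1 : g 1 = 1)
    (α : ℝ) (hα1 : g (((n : ℝ) - 1) / n) < α) (hα2 : α < 1) (x : Fin n → ℝ) :
    nges g α x = (n : ℝ) * (1 - α) * ⨆ i, |x i| := by
  obtain ⟨m, rfl⟩ := Nat.exists_eq_add_of_le' hn
  have hcl : 1 - α ≤ coeff (m + 1) g (Fin.last m) := by
    rw [coeff_last, hg1]
    push_cast at hα1
    rw [add_sub_cancel_right] at hα1
    linarith
  have hmax : ∀ j, absSorted x j ≤ absSorted x (Fin.last m) :=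
    fun j => absSorted_last m x ▸ absSorted_le_ciSup x j
  rw [nges, sges_eq_absSorted x (coeff_nonneg hg_mono) hα2 hcl hmax, absSorted_last]

/-- for `g((n-1)/n) < α < 1`, the non-scaled generalized-ES norm equals
`n(1-α)` times the maximum absolute entry `|x|₍ₙ₎`. -/
theorem stmt12 (n : ℕ) (hn : 1 ≤ n) (g : ℝ → ℝ)
    (hg_mono : MonotoneOn g (Set.Icc 0 1)) (hg0 : g 0 = 0) (hg1 : g 1 = 1)
    (hg_cont : ContinuousOn g (Set.Icc 0 1))
    (α : ℝ) (hα1 : g (((n : ℝ) - 1) / n) < α) (hα2 : α < 1) (x : Fin n → ℝ) :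
    nges g α x = (n : ℝ) * (1 - α) * ⨆ i, |x i| :=
  stmt12_general n hn g hg_mono hg1 α hα1 hα2 x
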